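/- arXiv:2209.13423 — 3 statements merged into one kernel-verified Lean document; each statement's English description precedes it below -/
import Mathlib

section
/- Let $\mathcal{E}_1,\dots,\mathcal{E}_m$ be mutually independent events with probabilities $p_1,\dots,p_m$ such that $p_1+\cdots+p_m \ge s$ for some $s \ge 1$. Then the probability that at most one of the events occurs is at most $(s+1)e^{1-s}$. -/
open MeasureTheory ProbabilityTheory
open scoped Classical

private lemma aux_mono {x y : ℝ} (hx : 1 ≤ x) (hxy : x ≤ y) :
    (1 + y) * Real.exp (1 - y) ≤ (1 + x) * Real.exp (1 - x) := by
  have hD : 1 + (y - x) ≤ Real.exp (y - x) := by linarith [Real.add_one_le_exp (y - x)]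
  have hE : Real.exp (1 - x) = Real.exp (1 - y) * Real.exp (y - x) := by
    rw [← Real.exp_add]; ring_nf
  have hpos : 0 < Real.exp (1 - y) := Real.exp_pos _
  have key : (1 + y) ≤ (1 + x) * Real.exp (y - x) := by
    nlinarith [mul_le_mul_of_nonneg_left hD (by linarith : (0:ℝ) ≤ 1 + x)]
  rw [hE]
  nlinarith [mul_le_mul_of_nonneg_right key hpos.le]

theorem stmt_2 {Ω : Type*} [MeasurableSpace Ω] (μ : Measure Ω) [IsProbabilityMeasure μ]
    (m : ℕ) (E : Fin m → Set Ω) (hmeas : ∀ i, MeasurableSet (E i))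
    (hindep : iIndepSet E μ)
    (p : Fin m → ℝ) (hp : ∀ i, μ (E i) = ENNReal.ofReal (p i))
    (s : ℝ) (hs : 1 ≤ s) (hsum : s ≤ ∑ i, p i) :
    (μ {ω | (Finset.univ.filter (fun i => ω ∈ E i)).card ≤ 1}).toReal
      ≤ (s + 1) * Real.exp (1 - s) := by
  set q : Fin m → ℝ := fun i => (μ (E i)).toReal with hq_def
  have hq0 : ∀ i, 0 ≤ q i := fun i => ENNReal.toReal_nonneg
  have hq1 : ∀ i, q i ≤ 1 := by
    intro i
    have := prob_le_one (μ := μ) (s := E i)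
    simpa using ENNReal.toReal_mono (by simp) this
  have hμq : ∀ i, μ (E i) = ENNReal.ofReal (q i) := fun i =>
    (ENNReal.ofReal_toReal (measure_ne_top μ _)).symm
  have hpq : ∀ i, p i ≤ q i := by
    intro i
    rcases le_or_gt 0 (p i) with h | h
    · simp [hq_def, hp i, ENNReal.toReal_ofReal h]
    · exact h.le.trans (hq0 i)
  set S : ℝ := ∑ i, q i with hS_def
  have hsS : s ≤ S := hsum.trans (Finset.sum_le_sum fun i _ => hpq i)
  -- the covering sets
  set B : Set Ω := ⋂ i, (E i)ᶜ with hB_def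
  set C : Fin m → Set Ω := fun j => ⋂ i, (if i = j then E i else (E i)ᶜ) with hC_def
  have hsub : {ω | (Finset.univ.filter (fun i => ω ∈ E i)).card ≤ 1} ⊆ B ∪ ⋃ j, C j := by
    intro ω hω
    simp only [Set.mem_setOf_eq] at hω
    by_cases h : ∀ i, ω ∉ E i
    · left; exact Set.mem_iInter.2 fun i => h i
    · push_neg at h
      obtain ⟨j, hj⟩ := h
      right
      refine Set.mem_iUnion.2 ⟨j, Set.mem_iInter.2 fun i => ?_⟩
      by_cases hij : i = j
      · subst hij; simpa using hj
      · simp only [hij, if_false]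
        intro hi
        have h1 : i ∈ Finset.univ.filter (fun k => ω ∈ E k) := by simp [hi]
        have h2 : j ∈ Finset.univ.filter (fun k => ω ∈ E k) := by simp [hj]
        exact hij (Finset.card_le_one.1 hω i h1 j h2)
  -- independence computations
  have hI : iIndep (fun i => MeasurableSpace.generateFrom {E i}) μ :=
    (iIndepSet_iff_iIndep E μ).1 hindep
  have hmE : ∀ i, MeasurableSet[MeasurableSpace.generateFrom {E i}] (E i) :=
    fun i => MeasurableSpace.measurableSet_generateFrom rfl
  have hcomplq : ∀ i, μ ((E i)ᶜ) = ENNReal.ofReal (1 - q i) := by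
    intro i
    rw [prob_compl_eq_one_sub (hmeas i), hμq i, ← ENNReal.ofReal_one,
      ← ENNReal.ofReal_sub _ (hq0 i)]
  have hB : μ B = ENNReal.ofReal (∏ i, (1 - q i)) := by
    rw [hB_def, hI.meas_iInter fun i => (hmE i).compl,
      ENNReal.ofReal_prod_of_nonneg fun i _ => by linarith [hq1 i]]
    exact Finset.prod_congr rfl fun i _ => hcomplq i
  have hC' : ∀ j, μ (C j)
      = ENNReal.ofReal (q j * ∏ i ∈ Finset.univ.erase j, (1 - q i)) := by
    intro j
    have hmeasC : ∀ i, MeasurableSet[MeasurableSpace.generateFrom {E i}]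
        (if i = j then E i else (E i)ᶜ) := by
      intro i
      by_cases hij : i = j
      · simpa [hij] using hmE i
      · simpa [hij] using (hmE i).compl
    rw [hC_def, hI.meas_iInter hmeasC]
    rw [← Finset.mul_prod_erase Finset.univ _ (Finset.mem_univ j)]
    have h1 : (if j = j then μ (E j) else μ ((E j)ᶜ)) = ENNReal.ofReal (q j) := by
      simp [hμq j]
    have h2 : ∏ i ∈ Finset.univ.erase j, μ (if i = j then E i else (E i)ᶜ)
        = ENNReal.ofReal (∏ i ∈ Finset.univ.erase j, (1 - q i)) := by
      rw [ENNReal.ofReal_prod_of_nonneg fun i _ => by linarith [hq1 i]]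
      refine Finset.prod_congr rfl fun i hi => ?_
      have hij : i ≠ j := (Finset.mem_erase.1 hi).1
      simp [hij, hcomplq i]
    simp only [apply_ite μ] at *
    rw [h1, h2, ← ENNReal.ofReal_mul (hq0 j)]
  -- measure bound
  set T : ℝ := ∏ i, (1 - q i) + ∑ j, q j * ∏ i ∈ Finset.univ.erase j, (1 - q i) with hT_def
  have hTnn : 0 ≤ T := by
    apply add_nonneg
    · exact Finset.prod_nonneg fun i _ => by linarith [hq1 i]
    · exact Finset.sum_nonneg fun j _ => mul_nonneg (hq0 j)
        (Finset.prod_nonneg fun i _ => by linarith [hq1 i])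
  have hμA : μ {ω | (Finset.univ.filter (fun i => ω ∈ E i)).card ≤ 1}
      ≤ ENNReal.ofReal T := by
    calc μ {ω | (Finset.univ.filter (fun i => ω ∈ E i)).card ≤ 1}
        ≤ μ (B ∪ ⋃ j, C j) := measure_mono hsub
      _ ≤ μ B + μ (⋃ j, C j) := measure_union_le _ _
      _ ≤ μ B + ∑ j, μ (C j) := by gcongr; exact measure_iUnion_fintype_le μ C
      _ = ENNReal.ofReal T := by
          rw [hB, hT_def, ENNReal.ofReal_add
            (Finset.prod_nonneg fun i _ => by linarith [hq1 i])
            (Finset.sum_nonneg fun j _ => mul_nonneg (hq0 j)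
              (Finset.prod_nonneg fun i _ => by linarith [hq1 i])),
            ENNReal.ofReal_sum_of_nonneg fun j _ => mul_nonneg (hq0 j)
              (Finset.prod_nonneg fun i _ => by linarith [hq1 i])]
          congr 1
          exact Finset.sum_congr rfl fun j _ => hC' j
  have h1 : (μ {ω | (Finset.univ.filter (fun i => ω ∈ E i)).card ≤ 1}).toReal ≤ T :=
    ENNReal.toReal_le_of_le_ofReal hTnn hμA
  refine h1.trans ?_
  -- real analysis
  have prod_le : ∀ (t : Finset (Fin m)), ∏ i ∈ t, (1 - q i) ≤ Real.exp (-∑ i ∈ t, q i) := by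
    intro t
    calc ∏ i ∈ t, (1 - q i) ≤ ∏ i ∈ t, Real.exp (-q i) := by
          refine Finset.prod_le_prod (fun i _ => by linarith [hq1 i]) fun i _ => ?_
          linarith [Real.add_one_le_exp (-q i)]
      _ = Real.exp (-∑ i ∈ t, q i) := by rw [← Real.exp_sum]; simp
  have hBbound : ∏ i, (1 - q i) ≤ Real.exp (1 - S) := by
    refine (prod_le Finset.univ).trans ?_
    exact Real.exp_le_exp.2 (by simp [hS_def])
  have hCbound : ∀ j, q j * ∏ i ∈ Finset.univ.erase j, (1 - q i)
      ≤ q j * Real.exp (1 - S) := by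
    intro j
    have herase : ∑ i ∈ Finset.univ.erase j, q i = S - q j := by
      rw [hS_def, Finset.sum_erase_eq_sub (Finset.mem_univ j)]
    refine mul_le_mul_of_nonneg_left ?_ (hq0 j)
    refine (prod_le _).trans ?_
    rw [herase]
    exact Real.exp_le_exp.2 (by linarith [hq1 j])
  have hT2 : T ≤ (1 + S) * Real.exp (1 - S) := by
    have hsum2 : ∑ j, q j * ∏ i ∈ Finset.univ.erase j, (1 - q i)
        ≤ S * Real.exp (1 - S) := by
      calc ∑ j, q j * ∏ i ∈ Finset.univ.erase j, (1 - q i)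
          ≤ ∑ j, q j * Real.exp (1 - S) := Finset.sum_le_sum fun j _ => hCbound j
        _ = S * Real.exp (1 - S) := by rw [← Finset.sum_mul]
    rw [hT_def]; nlinarith [Real.exp_pos (1 - S)]
  refine hT2.trans ?_
  have := aux_mono hs hsS
  linarith
end

section
/- Fix real $0<\epsilon<1/2$, integers $k' \ge 1$ and $j' \ge 1$, and suppose $\log(k(1-\epsilon)^{j}) \ge \log(1/(1-\epsilon))/\epsilon^2$ for all $1 \le j \le j'$. Then $\sum_{j=1}^{j'} \frac{k'\epsilon(1-\epsilon)^j \log k}{2\log(k(1-\epsilon)^j)} \le \frac{k'}{2}$. -/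
theorem stmt_10 (ε : ℝ) (hε0 : 0 < ε) (hε1 : ε < 1/2)
    (k' : ℝ) (hk' : 1 ≤ k') (j' : ℕ) (hj' : 1 ≤ j') (k : ℝ)
    (hlog : ∀ j ∈ Finset.Icc 1 j',
      Real.log (1 / (1 - ε)) / ε^2 ≤ Real.log (k * (1 - ε)^j)) :
    ∑ j ∈ Finset.Icc 1 j',
        k' * ε * (1 - ε)^j * Real.log k / (2 * Real.log (k * (1 - ε)^j))
      ≤ k' / 2 := by
  set x : ℝ := 1 - ε with hxdef
  have hx0 : 0 < x := by simp only [hxdef]; linarith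
  have hx1 : x < 1 := by simp only [hxdef]; linarith
  set c : ℝ := Real.log (1 / x) with hcdef
  have hc : 0 < c := Real.log_pos (one_lt_one_div hx0 hx1)
  have hcε : 0 < c / ε ^ 2 := by positivity
  have hclog : c = -Real.log x := by rw [hcdef, one_div, Real.log_inv]
  have hk : k ≠ 0 := by
    intro h
    have := hlog 1 (Finset.mem_Icc.mpr ⟨le_refl 1, hj'⟩)
    rw [h, zero_mul, Real.log_zero] at this
    linarith
  have hlogk : ∀ j : ℕ, Real.log k = Real.log (k * x ^ j) + j * c := by
    intro j
    rw [Real.log_mul hk (pow_ne_zero _ hx0.ne'), Real.log_pow, hclog]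
    ring
  -- per-term bound
  have hterm : ∀ j ∈ Finset.Icc 1 j',
      k' * ε * x ^ j * Real.log k / (2 * Real.log (k * x ^ j))
        ≤ k' / 2 * (ε * x ^ j) + k' / 2 * (ε ^ 3 * (j * x ^ j)) := by
    intro j hj
    have hL : c / ε ^ 2 ≤ Real.log (k * x ^ j) := hlog j hj
    set L : ℝ := Real.log (k * x ^ j) with hLdef
    have hLpos : 0 < L := lt_of_lt_of_le hcε hL
    have hjc : (j : ℝ) * c ≤ (j : ℝ) * (ε ^ 2 * L) := by
      have : c ≤ ε ^ 2 * L := by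
        rw [div_le_iff₀ (by positivity : (0:ℝ) < ε ^ 2)] at hL
        linarith
      exact mul_le_mul_of_nonneg_left this (Nat.cast_nonneg j)
    rw [hlogk j, ← hLdef, div_le_iff₀ (by positivity : (0:ℝ) < 2 * L)]
    have hxp : (0:ℝ) ≤ x ^ j := (pow_pos hx0 j).le
    have hnn : (0:ℝ) ≤ k' * ε * x ^ j := by positivity
    nlinarith [mul_le_mul_of_nonneg_left hjc hnn]
  calc ∑ j ∈ Finset.Icc 1 j',
        k' * ε * x ^ j * Real.log k / (2 * Real.log (k * x ^ j))
      ≤ ∑ j ∈ Finset.Icc 1 j',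
          (k' / 2 * (ε * x ^ j) + k' / 2 * (ε ^ 3 * ((j : ℝ) * x ^ j))) :=
        Finset.sum_le_sum hterm
    _ = k' / 2 * ε * ∑ j ∈ Finset.Icc 1 j', x ^ j
        + k' / 2 * ε ^ 3 * ∑ j ∈ Finset.Icc 1 j', (j : ℝ) * x ^ j := by
        rw [Finset.sum_add_distrib, Finset.mul_sum, Finset.mul_sum]
        congr 1 <;> exact Finset.sum_congr rfl (fun j _ => by ring)
    _ ≤ k' / 2 := by
        have hε' : 1 - x = ε := by simp [hxdef]
        have hs1 : ∑ j ∈ Finset.Icc 1 j', x ^ j ≤ x / ε := by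
          have heq : ∑ j ∈ Finset.Icc 1 j', x ^ j
              = x * ∑ i ∈ Finset.range j', x ^ i := by
            rw [← Finset.Ico_add_one_right_eq_Icc, Finset.sum_Ico_eq_sum_range, Finset.mul_sum]
            simp [pow_add, pow_succ, mul_comm]
          rw [heq]
          have : ∑ i ∈ Finset.range j', x ^ i ≤ (1 - x)⁻¹ :=
            Summable.sum_le_tsum _ (fun i _ => (pow_pos hx0 i).le)
              (summable_geometric_of_lt_one hx0.le hx1) |>.trans_eq
              (tsum_geometric_of_lt_one hx0.le hx1)
          rw [hε'] at this
          calc x * ∑ i ∈ Finset.range j', x ^ i ≤ x * ε⁻¹ :=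
                mul_le_mul_of_nonneg_left this hx0.le
            _ = x / ε := by rw [div_eq_mul_inv]
        have hs2 : ∑ j ∈ Finset.Icc 1 j', (j : ℝ) * x ^ j ≤ x / ε ^ 2 := by
          have habs : ‖x‖ < 1 := by rw [Real.norm_eq_abs, abs_of_pos hx0]; exact hx1
          have hsum := hasSum_coe_mul_geometric_of_norm_lt_one (r := x) habs
          have : ∑ j ∈ Finset.Icc 1 j', (j : ℝ) * x ^ j ≤ x / (1 - x) ^ 2 :=
            (Summable.sum_le_tsum _ (fun i _ => by positivity) hsum.summable).trans_eq
              hsum.tsum_eq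
          rwa [hε'] at this
        have h1 : k' / 2 * ε * ∑ j ∈ Finset.Icc 1 j', x ^ j
            ≤ k' / 2 * ε * (x / ε) :=
          mul_le_mul_of_nonneg_left hs1 (by positivity)
        have h2 : k' / 2 * ε ^ 3 * ∑ j ∈ Finset.Icc 1 j', (j : ℝ) * x ^ j
            ≤ k' / 2 * ε ^ 3 * (x / ε ^ 2) :=
          mul_le_mul_of_nonneg_left hs2 (by positivity)
        have e1 : k' / 2 * ε * (x / ε) = k' / 2 * x := by
          field_simp
        have e2 : k' / 2 * ε ^ 3 * (x / ε ^ 2) = k' / 2 * (ε * x) := by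
          field_simp
        have hk'0 : 0 < k' := lt_of_lt_of_le one_pos hk'
        nlinarith [mul_pos hk'0 (mul_pos hε0 hε0)]
end

section
/- For any non-adaptive deterministic contention resolution algorithm with maximum latency at most $t(k)$ on every instance of at most $k$ stations, every station's transmission schedule contains at least $k$ scheduled transmissions within its first $t(k)$ rounds, provided $k \ge 1$ and the algorithm is correct. -/
/-- Station `v` transmits successfully at global round `g`, given wake-up pattern `act`. -/
def Succeeds {N : ℕ} (sched : Fin N → ℕ → Bool) (act : Fin N → Option ℕ)
    (v : Fin N) (g : ℕ) : Prop :=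
  ∃ a, act v = some a ∧ a ≤ g ∧ sched v (g - a) = true ∧
    ∀ w, w ≠ v → ∀ b, act w = some b → b ≤ g → sched w (g - b) = false

theorem stmt_15 (N k t : ℕ) (hk : 1 ≤ k) (hkN : k ≤ N)
    (sched : Fin N → ℕ → Bool)
    (hcorrect : ∀ act : Fin N → Option ℕ,
      (Finset.univ.filter (fun w => (act w).isSome)).card ≤ k →
      ∀ v a, act v = some a → ∃ g, a ≤ g ∧ g < a + t ∧ Succeeds sched act v g) :
    ∀ v, k ≤ ((Finset.range t).filter (fun r => sched v r = true)).card := by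
  classical
  -- every station has a scheduled transmission before round t
  have hf : ∀ w : Fin N, ∃ rr, rr < t ∧ sched w rr = true := by
    intro w
    have hcard : (Finset.univ.filter
        (fun x => ((if x = w then some 0 else none : Option ℕ)).isSome)).card ≤ k := by
      have : (Finset.univ.filter
          (fun x => ((if x = w then some 0 else none : Option ℕ)).isSome)) = {w} := by
        ext x; simp only [Finset.mem_filter, Finset.mem_univ, true_and, Finset.mem_singleton]
        by_cases h : x = w <;> simp [h]
      rw [this]; simpa using hk
    obtain ⟨g, hg0, hgt, a, ha, hag, hsw, _⟩ :=
      hcorrect (fun x => if x = w then some 0 else none) hcard w 0 (by simp)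
    have ha0 : a = 0 := by simpa using ha.symm
    subst ha0
    exact ⟨g, by simpa using hgt, by simpa using hsw⟩
  set f : Fin N → ℕ := fun w => (hf w).choose with hfdef
  have hflt : ∀ w, f w < t := fun w => (hf w).choose_spec.1
  have hftrue : ∀ w, sched w (f w) = true := fun w => (hf w).choose_spec.2
  intro v
  by_contra hlt
  push_neg at hlt
  set S := (Finset.range t).filter (fun r => sched v r = true) with hS
  set m := S.card with hm
  have hmk : m < k := hlt
  -- injection from Fin m into stations ≠ v
  have hjb1 : ∀ i : Fin m, (i : ℕ) < N := fun i => lt_of_lt_of_le (lt_of_lt_of_le i.2 hmk.le) hkN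
  have hjb2 : ∀ i : Fin m, (i : ℕ) + 1 < N :=
    fun i => lt_of_le_of_lt (Nat.succ_le_of_lt i.2) (lt_of_lt_of_le hmk hkN)
  set j : Fin m → Fin N := fun i =>
    if (i : ℕ) < (v : ℕ) then ⟨i, hjb1 i⟩ else ⟨(i : ℕ) + 1, hjb2 i⟩ with hj
  have hjv : ∀ i, j i ≠ v := by
    intro i hc
    by_cases h : (i : ℕ) < (v : ℕ)
    · simp only [hj, if_pos h, Fin.ext_iff, Fin.val_mk] at hc; omega
    · simp only [hj, if_neg h, Fin.ext_iff, Fin.val_mk] at hc; omega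
  have hjinj : Function.Injective j := by
    intro i₁ i₂ hi
    by_cases h1 : (i₁ : ℕ) < (v : ℕ) <;> by_cases h2 : (i₂ : ℕ) < (v : ℕ) <;>
      simp only [hj, if_pos, if_neg, h1, h2] at hi <;>
      · have := congrArg Fin.val hi
        simp at this
        exact Fin.ext (by omega)
  set eqv : S ≃ Fin m := S.equivFin with heqv
  set act : Fin N → Option ℕ := fun x =>
    if x = v then some t
    else if h : ∃ i : Fin m, j i = x then some (t + ((eqv.symm h.choose : S) : ℕ) - f x)
    else none with hact
  have hactv : act v = some t := by simp [hact]
  have hactj : ∀ i : Fin m, act (j i) = some (t + ((eqv.symm i : S) : ℕ) - f (j i)) := by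
    intro i
    have hne : j i ≠ v := hjv i
    have hex : ∃ i' : Fin m, j i' = j i := ⟨i, rfl⟩
    have hch : hex.choose = i := hjinj hex.choose_spec
    simp [hact, if_neg hne, dif_pos hex, hch]
  have hcard : (Finset.univ.filter (fun w => (act w).isSome)).card ≤ k := by
    have hsub : (Finset.univ.filter (fun w => (act w).isSome)) ⊆
        insert v (Finset.univ.image j) := by
      intro x hx
      simp only [Finset.mem_filter] at hx
      by_cases h : x = v
      · simp [h]
      · simp only [hact, if_neg h] at hx
        by_cases h2 : ∃ i : Fin m, j i = x
        · obtain ⟨i, hi⟩ := h2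
          exact Finset.mem_insert_of_mem (Finset.mem_image.2 ⟨i, Finset.mem_univ i, hi⟩)
        · rw [dif_neg h2] at hx; simp at hx
    calc (Finset.univ.filter (fun w => (act w).isSome)).card
        ≤ (insert v (Finset.univ.image j)).card := Finset.card_le_card hsub
      _ ≤ (Finset.univ.image j).card + 1 := Finset.card_insert_le _ _
      _ ≤ m + 1 := by
          have := Finset.card_image_le (s := (Finset.univ : Finset (Fin m))) (f := j)
          simpa using Nat.add_le_add_right this 1
      _ ≤ k := hmk
  obtain ⟨g, hg1, hg2, a, ha, hag, hsv, hsil⟩ := hcorrect act hcard v t hactv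
  rw [hactv] at ha
  injection ha with ha; subst ha
  -- g - t is a scheduled transmission of v within [0, t)
  have hrS : g - t ∈ S := by
    simp only [hS, Finset.mem_filter, Finset.mem_range]
    exact ⟨by omega, hsv⟩
  set i : Fin m := eqv ⟨g - t, hrS⟩ with hi
  set w : Fin N := j i with hw
  have hwact : act w = some (t + (g - t) - f w) := by
    have h2 := hactj i
    rw [show ((eqv.symm i : S) : ℕ) = g - t from by
      rw [hi, Equiv.symm_apply_apply]] at h2
    exact h2
  have hgr : t + (g - t) = g := by omega
  have hble : t + (g - t) - f w ≤ g := by omega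
  have hgb : g - (t + (g - t) - f w) = f w := by
    have := hflt w; omega
  have := hsil w (hjv i) _ hwact hble
  rw [hgb, hftrue w] at this
  exact absurd this (by simp)
end
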